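/- For any finite graph G = (V,E) (possibly with parallel edges, no loops), the set of degree sequences {d_F ∈ ℤ^V : F ⊆ E}, where d_F(v) is the number of edges of F incident to v, is a constant-parity jump system. -/

import Mathlib

/-!
Let `d_F` be the degree sequence of `F ⊆ E` and `d_F(u) < d_G(u)`. Adding an edge `e ∈ G \ F`
at `u` gives `d_F + χ_u + χ_w`, where `w ≠ u` is the other end of `e`; this is the required second
step unless it moves away from `d_G` at `w`. In that case some `f ∈ F \ G` meets `w`, and removing
it leaves `d_F + χ_u - χ_z` for the other end `z` of `f`. Either `-χ_z` is a valid second step, or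
`d_F + χ_u` is again of the form `d_{F'} + χ_z` with `d_{F'}(z) < d_G(z)` and `F'` closer to `G`,
so we continue along this alternating path. Complementing edge sets reverses all increments,
which handles `d_F(u) > d_G(u)`. Parity holds because every edge has two distinct ends.
-/

/-- `s` is an `(x,y)`-increment: a signed unit vector moving `x` towards `y`. -/
def IsIncrement {V : Type*} [DecidableEq V] (x y s : V → ℤ) : Prop :=
  ∃ u : V, (s = Pi.single u 1 ∧ x u < y u) ∨ (s = -Pi.single u 1 ∧ y u < x u)

/-- `J` is a jump system. -/
def IsJumpSystem {V : Type*} [DecidableEq V] (J : Set (V → ℤ)) : Prop :=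
  J.Nonempty ∧ ∀ x ∈ J, ∀ y ∈ J, ∀ s, IsIncrement x y s → x + s ∉ J →
    ∃ r, IsIncrement (x + s) y r ∧ x + s + r ∈ J

/-- `J` has the constant-parity property. -/
def HasConstantParity {V : Type*} [Fintype V] (J : Set (V → ℤ)) : Prop :=
  ∀ x ∈ J, ∀ y ∈ J, Even (∑ v, x v - ∑ v, y v)

open Finset

theorem IsIncrement.neg_of_sub_sub {V : Type*} [DecidableEq V] {c x y s : V → ℤ}
    (h : IsIncrement (c - x) (c - y) s) : IsIncrement x y (-s) := by
  obtain ⟨u, ⟨rfl, hu⟩ | ⟨rfl, hu⟩⟩ := h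
  · exact ⟨u, Or.inr ⟨rfl, by simpa using hu⟩⟩
  · exact ⟨u, Or.inl ⟨neg_neg _, by simpa using hu⟩⟩

section DegreeSeq

variable {V E : Type*} {ends : E → Sym2 V}

theorem exists_ne_of_mem_ends (hloop : ∀ e, ¬(ends e).IsDiag) {e : E} {u : V}
    (hu : u ∈ ends e) : ∃ w, u ≠ w ∧ ends e = s(u, w) := by
  obtain ⟨w, hw⟩ := Sym2.mem_iff_exists.1 hu
  exact ⟨w, fun h => hloop e (hw ▸ Sym2.mk_isDiag_iff.2 h), hw⟩

variable [DecidableEq V]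

def degreeSeq (ends : E → Sym2 V) (F : Finset E) : V → ℤ :=
  fun v => #(F.filter fun e => v ∈ ends e)

theorem degreeSeq_insert [DecidableEq E] {F : Finset E} {e : E} (he : e ∉ F) {a b : V}
    (hab : ends e = s(a, b)) (hne : a ≠ b) :
    degreeSeq ends (insert e F) = degreeSeq ends F + Pi.single a 1 + Pi.single b 1 := by
  funext v
  simp only [degreeSeq, Pi.add_apply, filter_insert]
  by_cases hv : v ∈ ends e
  · rw [if_pos hv, card_insert_of_notMem fun h => he (mem_of_mem_filter _ h)]
    rw [hab, Sym2.mem_iff] at hv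
    rcases hv with rfl | rfl
    · simp [Pi.single_eq_of_ne hne]
    · simp [Pi.single_eq_of_ne hne.symm]
  · rw [if_neg hv]
    rw [hab, Sym2.mem_iff, not_or] at hv
    simp [Pi.single_eq_of_ne hv.1, Pi.single_eq_of_ne hv.2]

theorem degreeSeq_erase [DecidableEq E] {F : Finset E} {f : E} (hf : f ∈ F) {a b : V}
    (hab : ends f = s(a, b)) (hne : a ≠ b) :
    degreeSeq ends (F.erase f) = degreeSeq ends F - Pi.single a 1 - Pi.single b 1 := by
  have h := degreeSeq_insert (notMem_erase f F) hab hne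
  rw [insert_erase hf] at h
  rw [h]
  abel

theorem degreeSeq_compl [DecidableEq E] [Fintype E] (F : Finset E) :
    degreeSeq ends Fᶜ = degreeSeq ends univ - degreeSeq ends F := by
  funext v
  have hsub : F.filter (v ∈ ends ·) ⊆ univ.filter (v ∈ ends ·) :=
    filter_subset_filter _ (subset_univ F)
  have hcompl :
      Fᶜ.filter (v ∈ ends ·) = univ.filter (v ∈ ends ·) \ F.filter (v ∈ ends ·) := by
    ext e
    simp only [mem_filter, mem_compl, mem_sdiff, mem_univ, true_and]
    tauto
  simp only [degreeSeq, Pi.sub_apply, hcompl, card_sdiff_of_subset hsub,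
    Nat.cast_sub (card_le_card hsub)]

theorem exists_mem_sdiff_of_degreeSeq_lt [DecidableEq E] {F G : Finset E} {u : V}
    (h : degreeSeq ends F u < degreeSeq ends G u) : ∃ e ∈ G \ F, u ∈ ends e := by
  by_contra! hc
  have hsub : (G.filter fun e => u ∈ ends e) ⊆ F.filter fun e => u ∈ ends e := by
    intro e he
    rw [mem_filter] at he ⊢
    exact ⟨by_contra fun heF => hc e (mem_sdiff.2 ⟨he.1, heF⟩) he.2, he.2⟩
  have := card_le_card hsub
  simp only [degreeSeq] at h
  omega

theorem exists_increment_add_single [DecidableEq E] (hloop : ∀ e, ¬(ends e).IsDiag)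
    {F G : Finset E} {u : V} (hu : degreeSeq ends F u < degreeSeq ends G u) :
    ∃ t, IsIncrement (degreeSeq ends F + Pi.single u 1) (degreeSeq ends G) t ∧
      degreeSeq ends F + Pi.single u 1 + t ∈ Set.range (degreeSeq ends) := by
  induction hn : #(G \ F) using Nat.strong_induction_on generalizing F u with
  | _ n ih =>
  set x := degreeSeq ends F + Pi.single u 1
  obtain ⟨e, he, hue⟩ := exists_mem_sdiff_of_degreeSeq_lt hu
  obtain ⟨w, huw, hew⟩ := exists_ne_of_mem_ends hloop hue
  have hF₁ : degreeSeq ends (insert e F) = x + Pi.single w 1 :=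
    degreeSeq_insert (mem_sdiff.1 he).2 hew huw
  rcases le_or_gt (degreeSeq ends (insert e F) w) (degreeSeq ends G w) with hw | hw
  · refine ⟨Pi.single w 1, ⟨w, Or.inl ⟨rfl, ?_⟩⟩, insert e F, hF₁⟩
    rw [hF₁] at hw
    simp only [Pi.add_apply, Pi.single_eq_same] at hw
    omega
  obtain ⟨f, hf, hwf⟩ := exists_mem_sdiff_of_degreeSeq_lt hw
  obtain ⟨z, hwz, hfz⟩ := exists_ne_of_mem_ends hloop hwf
  have hF₂ : degreeSeq ends ((insert e F).erase f) = x - Pi.single z 1 := by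
    rw [degreeSeq_erase (mem_sdiff.1 hf).1 hfz hwz, hF₁]
    abel
  have hx : x = degreeSeq ends ((insert e F).erase f) + Pi.single z 1 := by
    rw [hF₂]
    abel
  rcases le_or_gt (degreeSeq ends G z) (degreeSeq ends ((insert e F).erase f) z) with hz | hz
  · refine ⟨-Pi.single z 1, ⟨z, Or.inr ⟨rfl, ?_⟩⟩, (insert e F).erase f, ?_⟩
    · rw [hx]
      simp only [Pi.add_apply, Pi.single_eq_same]
      omega
    · rw [hF₂, sub_eq_add_neg]
  have hlt : #(G \ (insert e F).erase f) < n := by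
    rw [← hn]
    refine card_lt_card ((ssubset_iff_of_subset ?_).2 ⟨e, he, ?_⟩)
    · grind
    · grind
  rw [hx]
  exact ih _ hlt hz rfl

theorem sum_degreeSeq [Fintype V] (hloop : ∀ e, ¬(ends e).IsDiag) (F : Finset E) :
    ∑ v, degreeSeq ends F v = 2 * #F := by
  have hends (e : E) : #(univ.filter fun v => v ∈ ends e) = 2 := by
    rw [← Sym2.card_toFinset_of_not_isDiag _ (hloop e)]
    congr 1
    ext v
    simp [Sym2.mem_toFinset]
  have := sum_card_bipartiteAbove_eq_sum_card_bipartiteBelow (s := univ) (t := F)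
    (r := fun v e => v ∈ ends e)
  simp only [bipartiteAbove, bipartiteBelow, hends, sum_const, smul_eq_mul] at this
  simp only [degreeSeq]
  exact_mod_cast this.trans (mul_comm _ _)

theorem exists_increment_sub_single [DecidableEq E] [Fintype E] (hloop : ∀ e, ¬(ends e).IsDiag)
    {F G : Finset E} {u : V} (hu : degreeSeq ends G u < degreeSeq ends F u) :
    ∃ t, IsIncrement (degreeSeq ends F + -Pi.single u 1) (degreeSeq ends G) t ∧
      degreeSeq ends F + -Pi.single u 1 + t ∈ Set.range (degreeSeq ends) := by
  have hu' : degreeSeq ends Fᶜ u < degreeSeq ends Gᶜ u := by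
    simp only [degreeSeq_compl, Pi.sub_apply]
    omega
  obtain ⟨t, ht, F', hF'⟩ := exists_increment_add_single hloop hu'
  have hx : degreeSeq ends Fᶜ + Pi.single u 1 =
      degreeSeq ends univ - (degreeSeq ends F + -Pi.single u 1) := by
    rw [degreeSeq_compl]
    abel
  rw [hx, degreeSeq_compl] at ht
  refine ⟨-t, ht.neg_of_sub_sub, F'ᶜ, ?_⟩
  rw [degreeSeq_compl, hF', hx]
  abel

end DegreeSeq

/-- For a finite multigraph (possibly parallel edges, no loops), the set of
degree sequences of all edge subsets is a constant-parity jump system. -/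
theorem stmt_8 {V E : Type*} [DecidableEq V] [Fintype V] [DecidableEq E] [Fintype E]
    (ends : E → Sym2 V) (hloop : ∀ e, ¬ (ends e).IsDiag) :
    IsJumpSystem {x : V → ℤ |
        ∃ F : Finset E, ∀ v, x v = ((F.filter fun e => v ∈ ends e).card : ℤ)} ∧
      HasConstantParity {x : V → ℤ |
        ∃ F : Finset E, ∀ v, x v = ((F.filter fun e => v ∈ ends e).card : ℤ)} := by
  have hJ : {x : V → ℤ | ∃ F : Finset E, ∀ v, x v = ((F.filter fun e => v ∈ ends e).card : ℤ)} =
      Set.range (degreeSeq ends) := by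
    ext x
    simp only [Set.mem_ofPred_eq, Set.mem_range, funext_iff, degreeSeq, eq_comm]
  rw [hJ]
  refine ⟨⟨⟨_, ∅, rfl⟩, ?_⟩, ?_⟩
  · rintro _ ⟨F, rfl⟩ _ ⟨G, rfl⟩ s ⟨u, ⟨rfl, hu⟩ | ⟨rfl, hu⟩⟩ -
    · exact exists_increment_add_single hloop hu
    · exact exists_increment_sub_single hloop hu
  · rintro _ ⟨F, rfl⟩ _ ⟨G, rfl⟩
    rw [sum_degreeSeq hloop, sum_degreeSeq hloop]
    exact ⟨#F - #G, by ring⟩
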